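/- Let E be a finite-dimensional real normed vector space, Γ₀ ⊂ E a ℤ-lattice (a discrete additive subgroup spanning E over ℝ), and E₁, E₂ ⊆ E vector subspaces with E = E₁ ⊕ E₂. Let f : E → E be a linear endomorphism such that f(Γ₀) ⊆ Γ₀, f(E₁) ⊆ E₁, f(E₂) ⊆ E₂, and the restriction of f − Id to E₁ is injective (equivalently, invertible as a map E₁ → E₁). Let π₂ : E → E₂ denote the projection onto E₂ along E₁, and assume π₂(Γ₀) is dense in E₂. Then f − Id is invertible on E. -/

import Mathlib

/-!
Suppose `g = f - id` is singular. Since `g` preserves `Γ₀`, its matrix in a basis of `Γ₀` is an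
integer matrix with zero determinant, so some nonzero `φ : E →ₗ[ℝ] ℝ`, integer-valued on `Γ₀`,
kills the range of `g`. That range contains `E₁`, because `g` is bijective on `E₁`; hence
`φ = φ ∘ π₂`, so `φ` is integer-valued on `π₂(Γ₀)` and, by density and continuity, on all of `E₂`.
A linear functional taking only integer values on a subspace vanishes there, so `φ = φ ∘ π₂ = 0`.
-/

open Module

theorem LinearMap.exists_dual_ne_zero_comp_eq_zero_of_det_eq_zero {R M : Type*} [CommRing R]
    [IsDomain R] [AddCommGroup M] [Module R M] [Free R M] [Module.Finite R M]
    {f : M →ₗ[R] M} (hf : f.det = 0) : ∃ ψ : Dual R M, ψ ≠ 0 ∧ ψ ∘ₗ f = 0 := by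
  rw [← f.det_dualMap, LinearMap.det_eq_zero_iff_ker_ne_bot] at hf
  obtain ⟨ψ, hψ, hψ0⟩ := Submodule.exists_mem_ne_zero_of_ne_bot hf
  exact ⟨ψ, hψ0, hψ⟩

theorem Submodule.le_range_of_mapsTo_of_injOn {K V : Type*} [Field K] [AddCommGroup V]
    [Module K V] {p : Submodule K V} [FiniteDimensional K p] {g : V →ₗ[K] V}
    (hp : ∀ x ∈ p, g x ∈ p) (hinj : ∀ x ∈ p, g x = 0 → x = 0) : p ≤ LinearMap.range g := by
  have hsurj : Function.Surjective (g.restrict hp) := by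
    refine LinearMap.injective_iff_surjective.mp ((injective_iff_map_eq_zero _).mpr fun x hx => ?_)
    exact Subtype.ext (hinj x x.2 (congrArg Subtype.val hx))
  intro x hx
  obtain ⟨y, hy⟩ := hsurj ⟨x, hx⟩
  exact ⟨y, congrArg Subtype.val hy⟩

theorem LinearMap.eq_zero_of_mapsTo_range_intCast {V : Type*} [AddCommGroup V] [Module ℝ V]
    {φ : V →ₗ[ℝ] ℝ} {p : Submodule ℝ V} (hφ : Set.MapsTo φ p (Set.range ((↑) : ℤ → ℝ))) :
    ∀ x ∈ p, φ x = 0 := by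
  intro x hx
  by_contra hne
  obtain ⟨n, hn⟩ := hφ (p.smul_mem (2 * φ x)⁻¹ hx)
  have : (2 * n : ℝ) = 1 := by
    rw [hn, map_smul, smul_eq_mul]; field_simp
  have : (2 * n : ℤ) = 1 := by exact_mod_cast this
  omega

section ZLattice

variable {E : Type*} [NormedAddCommGroup E] [NormedSpace ℝ E] [FiniteDimensional ℝ E]
  (L : Submodule ℤ E) [DiscreteTopology L] [IsZLattice ℝ L]

theorem ZLattice.det_eq_intCast_det {g : E →ₗ[ℝ] E} {gL : L →ₗ[ℤ] L}
    (hgL : ∀ x : L, (gL x : E) = g x) : g.det = gL.det := by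
  let b := Free.chooseBasis ℤ L
  have hmat : LinearMap.toMatrix (b.ofZLatticeBasis ℝ L) (b.ofZLatticeBasis ℝ L) g =
      (LinearMap.toMatrix b b gL).map (Int.castRingHom ℝ) := by
    ext i j
    simp [LinearMap.toMatrix_apply, ← hgL]
  rw [← LinearMap.det_toMatrix (b.ofZLatticeBasis ℝ L), ← LinearMap.det_toMatrix b, hmat]
  exact ((Int.castRingHom ℝ).map_det _).symm

theorem ZLattice.exists_dual_extension (ψ : Dual ℤ L) :
    ∃ φ : Dual ℝ E, ∀ x : L, φ x = ψ x := by
  let b := Free.chooseBasis ℤ L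
  refine ⟨(b.ofZLatticeBasis ℝ L).constr ℝ fun i => (ψ (b i) : ℝ), fun x => ?_⟩
  suffices (LinearMap.restrictScalars ℤ ((b.ofZLatticeBasis ℝ L).constr ℝ fun i => (ψ (b i) : ℝ)))
      ∘ₗ L.subtype = (Int.castAddHom ℝ).toIntLinearMap ∘ₗ ψ from LinearMap.congr_fun this x
  refine b.ext fun i => ?_
  simp [← b.ofZLatticeBasis_apply ℝ L, -Basis.ofZLatticeBasis_apply]

theorem ZLattice.exists_intValued_dual_ne_zero_comp_eq_zero {g : E →ₗ[ℝ] E}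
    (hg : ∀ x ∈ L, g x ∈ L) (hinj : ¬ Function.Injective g) :
    ∃ φ : Dual ℝ E, φ ≠ 0 ∧ φ ∘ₗ g = 0 ∧ Set.MapsTo φ L (Set.range ((↑) : ℤ → ℝ)) := by
  set gL : L →ₗ[ℤ] L := (g.restrictScalars ℤ).restrict hg
  have hdet : gL.det = 0 := by
    have := ZLattice.det_eq_intCast_det L (gL := gL) fun _ => rfl
    rw [LinearMap.det_eq_zero_iff_ker_ne_bot.mpr (by rwa [Ne, LinearMap.ker_eq_bot])] at this
    exact_mod_cast this.symm
  obtain ⟨ψ, hψ0, hψg⟩ := LinearMap.exists_dual_ne_zero_comp_eq_zero_of_det_eq_zero hdet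
  obtain ⟨φ, hφ⟩ := ZLattice.exists_dual_extension L ψ
  refine ⟨φ, fun h => hψ0 ?_, ?_, fun x hx => ⟨ψ ⟨x, hx⟩, (hφ ⟨x, hx⟩).symm⟩⟩
  · ext x; simpa [h] using (hφ x).symm
  · refine LinearMap.ext_on (IsZLattice.span_top (K := ℝ) (L := L)) fun x hx => ?_
    calc φ (g x) = ψ (gL ⟨x, hx⟩) := hφ (gL ⟨x, hx⟩)
      _ = 0 := by exact_mod_cast LinearMap.congr_fun hψg ⟨x, hx⟩

end ZLattice

theorem stmt_7_general {E : Type*} [NormedAddCommGroup E] [NormedSpace ℝ E] [FiniteDimensional ℝ E]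
    (Γ₀ : Submodule ℤ E) [DiscreteTopology Γ₀] [IsZLattice ℝ Γ₀]
    (E₁ E₂ : Submodule ℝ E) (hcompl : IsCompl E₁ E₂)
    (f : E →ₗ[ℝ] E)
    (hΓ : ∀ x ∈ Γ₀, f x ∈ Γ₀)
    (hE₁ : ∀ x ∈ E₁, f x ∈ E₁)
    (hinj : ∀ x ∈ E₁, f x = x → x = 0)
    (hdense : closure ((fun x : E => ((Submodule.linearProjOfIsCompl E₂ E₁ hcompl.symm) x : E)) ''
      (Γ₀ : Set E)) = (E₂ : Set E)) :
    Function.Bijective (⇑(f - (LinearMap.id : E →ₗ[ℝ] E))) := by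
  set g := f - LinearMap.id
  suffices hg : Function.Injective g from ⟨hg, LinearMap.injective_iff_surjective.mp hg⟩
  by_contra hg
  obtain ⟨φ, hφ0, hφg, hφΓ⟩ := ZLattice.exists_intValued_dual_ne_zero_comp_eq_zero Γ₀ (g := g)
    (fun x hx => sub_mem (hΓ x hx) hx) hg
  have hφE₁ : ∀ x ∈ E₁, φ x = 0 := by
    intro x hx
    obtain ⟨y, rfl⟩ := Submodule.le_range_of_mapsTo_of_injOn (g := g)
      (fun x hx => sub_mem (hE₁ x hx) hx) (fun x hx h => hinj x hx (sub_eq_zero.mp h)) hx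
    exact LinearMap.congr_fun hφg y
  have hφπ : ∀ x, φ (E₂.projection E₁ hcompl.symm x) = φ x := fun x =>
    (sub_eq_zero.mp (by rw [← map_sub]; exact hφE₁ _ (Submodule.sub_projection_mem _ x))).symm
  have hφE₂ : Set.MapsTo φ E₂ (Set.range ((↑) : ℤ → ℝ)) := by
    rw [← hdense, ← Int.isClosedEmbedding_coe_real.isClosed_range.closure_eq]
    refine Set.MapsTo.closure ?_ φ.continuous_of_finiteDimensional
    rintro - ⟨x, hx, rfl⟩
    show φ (E₂.projection E₁ hcompl.symm x) ∈ _
    exact hφπ x ▸ hφΓ hx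
  apply hφ0
  ext x
  rw [← hφπ]
  exact LinearMap.eq_zero_of_mapsTo_range_intCast hφE₂ _ (Submodule.projection_apply_mem _ x)

/-- Let `E` be a finite-dimensional real normed vector space, `Γ₀` a ℤ-lattice
in `E`, `E = E₁ ⊕ E₂` a direct sum decomposition, and `f : E → E` linear with
`f(Γ₀) ⊆ Γ₀`, `f(E₁) ⊆ E₁`, `f(E₂) ⊆ E₂`, and `(f − Id)|_{E₁}` injective. If the
projection `π₂(Γ₀)` onto `E₂` along `E₁` is dense in `E₂`, then `f − Id` is invertible. -/
theorem stmt_7 {E : Type*} [NormedAddCommGroup E] [NormedSpace ℝ E] [FiniteDimensional ℝ E]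
    (Γ₀ : Submodule ℤ E) [DiscreteTopology Γ₀] [IsZLattice ℝ Γ₀]
    (E₁ E₂ : Submodule ℝ E) (hcompl : IsCompl E₁ E₂)
    (f : E →ₗ[ℝ] E)
    (hΓ : ∀ x ∈ Γ₀, f x ∈ Γ₀)
    (hE₁ : ∀ x ∈ E₁, f x ∈ E₁)
    (hE₂ : ∀ x ∈ E₂, f x ∈ E₂)
    (hinj : ∀ x ∈ E₁, f x = x → x = 0)
    (hdense : closure ((fun x : E => ((Submodule.linearProjOfIsCompl E₂ E₁ hcompl.symm) x : E)) ''
      (Γ₀ : Set E)) = (E₂ : Set E)) :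
    Function.Bijective (⇑(f - (LinearMap.id : E →ₗ[ℝ] E))) :=
  stmt_7_general Γ₀ E₁ E₂ hcompl f hΓ hE₁ hinj hdense
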